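/- arXiv:1407.8065 — 3 statements merged into one kernel-verified Lean document; each statement's English description precedes it below -/
import Mathlib

section
/- Let ε ∈ (0,1), n ≥ 1, and let φ ∈ Φ be the true parameter. Then the probability that |φ^LS_n(x^n) − φ| > δ₁(x^n, ε) is at most ε, where δ₁(x^n, ε) = (1/|f′(φ^LS_n)|)·√((2/n)·V_max·ln(2/ε)) + (L/n)·V_max·ln(2/ε). -/
/-!
Write `s` for the sample mean. Since `f` is strictly monotone on `Φ`, the inverse `g = f⁻¹` has
`g' = 1 / f' ∘ g` and `|g''| = |f'' / f'³| ∘ g ≤ L`, so Taylor's formula for `g` at `f(φ^LS)` gives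
`|φ - φ^LS| ≤ |f φ - f φ^LS| / |f' φ^LS| + L/2 · (f φ - f φ^LS)²`. As `f(φ^LS)` is the point of the
interval `f(Φ)` nearest to `s`, `|f φ - f φ^LS| ≤ |f φ - s|`. Hence `|φ^LS - φ| > δ₁` forces
`|s - f φ| > t := √((2/n) V_max ln(2/ε))`, and by Hoeffding's inequality this has probability at
most `2 exp(-2 n t² / (b - a)²) = ε`. The Taylor bound is proved in `f`-coordinates, without
constructing `g`, by two comparison (fencing) arguments.
-/

open MeasureTheory ProbabilityTheory Set Real Finset NNReal

lemma abs_sub_le_abs_sub_of_isMinOn_uIcc {r y s : ℝ}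
    (hmin : IsMinOn (fun w => |s - w|) (uIcc r y) r) : |r - y| ≤ |s - y| := by
  have hy : |s - r| ≤ |s - y| := hmin right_mem_uIcc
  by_cases hs : s ∈ uIcc r y
  · have hr : |s - r| ≤ |s - s| := hmin hs
    grind
  · rw [Set.mem_uIcc] at hs
    grind

section InverseTaylor

variable {f f' f'' g g' β β' : ℝ → ℝ} {L u v : ℝ}

lemma abs_le_of_abs_deriv_le_deriv
    (hg : ∀ x ∈ Icc u v, HasDerivWithinAt g (g' x) (Icc u v) x)
    (hβ : ∀ x ∈ Icc u v, HasDerivWithinAt β (β' x) (Icc u v) x)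
    (hbound : ∀ x ∈ Icc u v, |g' x| ≤ β' x) (hu : |g u| ≤ β u) :
    ∀ x ∈ Icc u v, |g x| ≤ β x := by
  have hright {h h' : ℝ → ℝ} (hh : ∀ x ∈ Icc u v, HasDerivWithinAt h (h' x) (Icc u v) x) :
      ∀ x ∈ Ico u v, HasDerivWithinAt h (h' x) (Ici x) x := fun x hx =>
    (hh x (Ico_subset_Icc_self hx)).mono_of_mem_nhdsWithin (Icc_mem_nhdsGE_of_mem hx)
  exact image_norm_le_of_norm_deriv_right_le_deriv_boundary'
    (fun x hx => (hg x hx).continuousWithinAt) (hright hg) hu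
    (fun x hx => (hβ x hx).continuousWithinAt) (hright hβ)
    (fun x hx => hbound x (Ico_subset_Icc_self hx))

lemma abs_sub_sub_div_deriv_le_of_deriv_pos (huv : u ≤ v)
    (hf' : ∀ x ∈ Icc u v, HasDerivWithinAt f (f' x) (Icc u v) x)
    (hf'' : ∀ x ∈ Icc u v, HasDerivWithinAt f' (f'' x) (Icc u v) x)
    (hpos : ∀ x ∈ Icc u v, 0 < f' x) (hL : ∀ x ∈ Icc u v, |f'' x| ≤ L * f' x ^ 3) :
    |v - u - (f v - f u) / f' u| ≤ L / 2 * (f v - f u) ^ 2 := by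
  -- `1 / f'` is `L`-Lipschitz as a function of `f x`
  have hinv : ∀ x ∈ Icc u v, |(f' x)⁻¹ - (f' u)⁻¹| ≤ L * (f x - f u) := by
    refine abs_le_of_abs_deriv_le_deriv
      (fun x hx => ((hf'' x hx).inv (hpos x hx).ne').sub_const _)
      (fun x hx => ((hf' x hx).sub_const _).const_mul L) (fun x hx => ?_) (by simp)
    have hfx := hpos x hx
    rw [abs_div, abs_neg, abs_of_pos (pow_pos hfx 2), div_le_iff₀ (pow_pos hfx 2)]
    linarith [hL x hx]
  refine abs_le_of_abs_deriv_le_deriv (g := fun x => x - u - (f x - f u) / f' u)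
    (β := fun x => L / 2 * (f x - f u) ^ 2) (β' := fun x => L * (f x - f u) * f' x)
    (fun x hx => ((hasDerivWithinAt_id x _).sub_const u).sub
      (((hf' x hx).sub_const _).div_const _))
    (fun x hx => ((((hf' x hx).sub_const _).pow 2).const_mul _).congr_deriv (by ring))
    (fun x hx => ?_) (by simp) v (right_mem_Icc.mpr huv)
  have hfx := hpos x hx
  have hfu := hpos u (left_mem_Icc.mpr huv)
  calc |1 - f' x / f' u| = f' x * |(f' x)⁻¹ - (f' u)⁻¹| := by
        rw [← abs_of_pos hfx, ← abs_mul, abs_of_pos hfx]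
        congr 1
        field_simp
    _ ≤ f' x * (L * (f x - f u)) := by gcongr; exact hinv x hx
    _ = L * (f x - f u) * f' x := by ring

lemma abs_sub_sub_div_deriv_le_of_le (huv : u ≤ v)
    (hf' : ∀ x ∈ Icc u v, HasDerivWithinAt f (f' x) (Icc u v) x)
    (hf'' : ∀ x ∈ Icc u v, HasDerivWithinAt f' (f'' x) (Icc u v) x)
    (hne : ∀ x ∈ Icc u v, f' x ≠ 0) (hL : ∀ x ∈ Icc u v, |f'' x| ≤ L * |f' x| ^ 3) :
    |v - u - (f v - f u) / f' u| ≤ L / 2 * (f v - f u) ^ 2 := by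
  have hcont : ContinuousOn f' (Icc u v) := fun x hx => (hf'' x hx).continuousWithinAt
  rcases isPreconnected_Icc.eq_or_eq_neg_of_sq_eq hcont.abs hcont (fun x _ => sq_abs (f' x))
    (hne _) with hσ | hσ
  · replace hσ : ∀ x ∈ Icc u v, |f' x| = f' x := fun x hx => hσ hx
    exact abs_sub_sub_div_deriv_le_of_deriv_pos huv hf' hf''
      (fun x hx => hσ x hx ▸ abs_pos.mpr (hne x hx)) (fun x hx => hσ x hx ▸ hL x hx)
  · replace hσ : ∀ x ∈ Icc u v, |f' x| = -f' x := fun x hx => hσ hx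
    have hneg := abs_sub_sub_div_deriv_le_of_deriv_pos (f := fun x => -f x) (f' := fun x => -f' x)
      (f'' := fun x => -f'' x) huv (fun x hx => (hf' x hx).neg) (fun x hx => (hf'' x hx).neg)
      (fun x hx => hσ x hx ▸ abs_pos.mpr (hne x hx))
      (fun x hx => by simpa only [abs_neg, ← hσ x hx] using hL x hx)
    rwa [neg_sub_neg, div_neg, ← neg_div, neg_sub, ← neg_sq, neg_sub] at hneg

lemma abs_sub_sub_div_deriv_le {s : Set ℝ} (hs : s.OrdConnected)
    (hf' : ∀ x ∈ s, HasDerivWithinAt f (f' x) s x)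
    (hf'' : ∀ x ∈ s, HasDerivWithinAt f' (f'' x) s x)
    (hne : ∀ x ∈ s, f' x ≠ 0) (hL : ∀ x ∈ s, |f'' x| ≤ L * |f' x| ^ 3)
    (hu : u ∈ s) (hv : v ∈ s) :
    |v - u - (f v - f u) / f' u| ≤ L / 2 * (f v - f u) ^ 2 := by
  rcases le_total u v with huv | hvu
  · have hsub : Icc u v ⊆ s := hs.out hu hv
    exact abs_sub_sub_div_deriv_le_of_le huv (fun x hx => (hf' x (hsub hx)).mono hsub)
      (fun x hx => (hf'' x (hsub hx)).mono hsub) (fun x hx => hne x (hsub hx))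
      (fun x hx => hL x (hsub hx))
  · -- reflect `Icc v u` through its midpoint, which swaps the roles of `u` and `v`
    have hsub : Icc v u ⊆ s := hs.out hv hu
    have hmaps : MapsTo (fun x => u + v - x) (Icc v u) (Icc v u) := fun x hx =>
      ⟨by linarith [hx.2], by linarith [hx.1]⟩
    have hrefl (x : ℝ) : HasDerivWithinAt (fun x => u + v - x) (-1) (Icc v u) x :=
      (hasDerivWithinAt_id x _).const_sub _
    have hrefl_mem {x : ℝ} (hx : x ∈ Icc v u) : u + v - x ∈ s := hsub (hmaps hx)
    have key := abs_sub_sub_div_deriv_le_of_le (f := fun x => f (u + v - x))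
      (f' := fun x => -f' (u + v - x)) (f'' := fun x => f'' (u + v - x)) hvu
      (fun x hx => (((hf' _ (hrefl_mem hx)).mono hsub).comp x (hrefl x) hmaps).congr_deriv
        (by ring))
      (fun x hx => (((hf'' _ (hrefl_mem hx)).mono hsub).comp x (hrefl x) hmaps).neg.congr_deriv
        (by ring))
      (fun x hx => neg_ne_zero.mpr (hne _ (hrefl_mem hx)))
      (fun x hx => by simpa only [abs_neg] using hL _ (hrefl_mem hx))
    simp only [add_sub_cancel_left, add_sub_cancel_right] at key
    rwa [div_neg, sub_neg_eq_add, ← abs_neg, neg_add, neg_sub, ← sub_eq_add_neg] at key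

lemma abs_sub_le_of_isMinOn {s : Set ℝ} (hs : s.OrdConnected)
    (hf' : ∀ x ∈ s, HasDerivWithinAt f (f' x) s x)
    (hf'' : ∀ x ∈ s, HasDerivWithinAt f' (f'' x) s x)
    (hne : ∀ x ∈ s, f' x ≠ 0) (hL : ∀ x ∈ s, |f'' x| ≤ L * |f' x| ^ 3)
    {y t : ℝ} (hu : u ∈ s) (hv : v ∈ s) (hmin : IsMinOn (fun w => |y - f w|) s u)
    (hy : |y - f v| ≤ t) :
    |u - v| ≤ t / |f' u| + L / 2 * t ^ 2 := by
  have hL0 : 0 ≤ L :=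
    nonneg_of_mul_nonneg_left ((abs_nonneg _).trans (hL u hu)) (pow_pos (abs_pos.mpr (hne u hu)) 3)
  have hrange : uIcc (f u) (f v) ⊆ f '' s :=
    (hs.isPreconnected.image f fun x hx => (hf' x hx).continuousWithinAt).ordConnected.uIcc_subset
      (mem_image_of_mem f hu) (mem_image_of_mem f hv)
  have hproj : |f v - f u| ≤ t := by
    refine (abs_sub_comm (f v) (f u)).trans_le
      ((abs_sub_le_abs_sub_of_isMinOn_uIcc fun w hw => ?_).trans hy)
    obtain ⟨x, hx, rfl⟩ := hrange hw
    exact hmin hx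
  have htaylor := abs_sub_sub_div_deriv_le hs hf' hf'' hne hL hu hv
  calc |u - v| = |(v - u - (f v - f u) / f' u) + (f v - f u) / f' u| := by
        rw [abs_sub_comm, sub_add_cancel]
    _ ≤ L / 2 * (f v - f u) ^ 2 + |f v - f u| / |f' u| :=
        (abs_add_le _ _).trans (by rw [abs_div]; gcongr)
    _ ≤ L / 2 * t ^ 2 + t / |f' u| := by
        have hsq : (f v - f u) ^ 2 ≤ t ^ 2 := sq_le_sq' (abs_le.mp hproj).1 (abs_le.mp hproj).2
        gcongr
    _ = t / |f' u| + L / 2 * t ^ 2 := add_comm _ _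

end InverseTaylor

section Hoeffding

variable {Ω ι : Type*} [MeasurableSpace Ω] {μ : Measure Ω}

lemma measureReal_abs_sum_ge_le_of_iIndepFun [IsFiniteMeasure μ] {X : ι → Ω → ℝ}
    (hindep : iIndepFun X μ) {c : ℝ≥0} {s : Finset ι} (hsubG : ∀ i ∈ s, HasSubgaussianMGF (X i) c μ) {t : ℝ}
    (ht : 0 ≤ t) :
    μ.real {ω | t ≤ |∑ i ∈ s, X i ω|} ≤ 2 * exp (-t ^ 2 / (2 * (#s * c))) := by
  have hupper := HasSubgaussianMGF.measure_sum_ge_le_of_iIndepFun hindep hsubG ht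
  have hlower := HasSubgaussianMGF.measure_sum_ge_le_of_iIndepFun (X := fun i ω => -X i ω)
    (hindep.comp (fun _ x => -x) (fun _ => measurable_neg)) (fun i hi => (hsubG i hi).neg) ht
  simp only [sum_const, nsmul_eq_mul, sum_neg_distrib] at hupper hlower
  calc μ.real {ω | t ≤ |∑ i ∈ s, X i ω|}
      ≤ μ.real ({ω | t ≤ ∑ i ∈ s, X i ω} ∪ {ω | t ≤ -∑ i ∈ s, X i ω}) := by
        refine measureReal_mono (fun ω hω => ?_)
        rcases le_abs'.mp (show t ≤ _ from hω) with h | h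
        exacts [Or.inr (show t ≤ _ by linarith), Or.inl h]
    _ ≤ _ := measureReal_union_le _ _
    _ ≤ 2 * exp (-t ^ 2 / (2 * (#s * c))) := by
        push_cast at hupper hlower
        linarith

lemma measureReal_abs_sum_sub_ge_le_of_mem_Icc [IsProbabilityMeasure μ] {X : ι → Ω → ℝ}
    (hmeas : ∀ i, AEMeasurable (X i) μ) (hindep : iIndepFun X μ) {a b : ℝ}
    (hbound : ∀ i, ∀ᵐ ω ∂μ, X i ω ∈ Icc a b) {m : ℝ} (hmean : ∀ i, μ[X i] = m)
    (s : Finset ι) {t : ℝ} (ht : 0 ≤ t) :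
    μ.real {ω | t ≤ |∑ i ∈ s, (X i ω - m)|} ≤ 2 * exp (-2 * t ^ 2 / (#s * (b - a) ^ 2)) := by
  have hsubG : ∀ i ∈ s, HasSubgaussianMGF (fun ω => X i ω - m) ((‖b - a‖₊ / 2) ^ 2) μ :=
    fun i _ => hmean i ▸ hasSubgaussianMGF_of_mem_Icc (hmeas i) (hbound i)
  refine (measureReal_abs_sum_ge_le_of_iIndepFun
    (hindep.comp (fun _ x => x - m) (fun _ => measurable_sub_const m)) hsubG ht).trans_eq ?_
  congr 2
  push_cast
  rw [norm_eq_abs, div_pow, sq_abs, ← div_pow,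
    show (2 : ℝ) * (#s * ((b - a) / 2) ^ 2) = #s * (b - a) ^ 2 / 2 by ring, div_div_eq_mul_div]
  ring

lemma measure_abs_sampleMean_sub_ge_le_of_mem_Icc [IsProbabilityMeasure μ] {n : ℕ} (hn : n ≠ 0)
    {X : Fin n → Ω → ℝ} (hmeas : ∀ i, AEMeasurable (X i) μ) (hindep : iIndepFun X μ) {a b : ℝ}
    (hbound : ∀ i, ∀ᵐ ω ∂μ, X i ω ∈ Icc a b) {m : ℝ} (hmean : ∀ i, μ[X i] = m)
    {t : ℝ} (ht : 0 ≤ t) :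
    μ {ω | t ≤ |(∑ i, X i ω) / n - m|} ≤
      ENNReal.ofReal (2 * exp (-2 * n * t ^ 2 / (b - a) ^ 2)) := by
  have hn' : (0 : ℝ) < n := by positivity
  have hevent : {ω | t ≤ |(∑ i, X i ω) / n - m|} = {ω | n * t ≤ |∑ i, (X i ω - m)|} := by
    ext ω
    have hmean_sub : (∑ i, X i ω) / n - m = (∑ i, (X i ω - m)) / n := by
      rw [sum_sub_distrib, sum_const, card_univ, Fintype.card_fin, nsmul_eq_mul]
      field_simp
    simp only [mem_ofPred_eq, hmean_sub, abs_div, abs_of_pos hn', le_div_iff₀' hn']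
  have hbound := measureReal_abs_sum_sub_ge_le_of_mem_Icc hmeas hindep hbound hmean univ
    (mul_nonneg hn'.le ht)
  rw [card_univ, Fintype.card_fin] at hbound
  rw [hevent, ← ofReal_measureReal]
  refine ENNReal.ofReal_le_ofReal (hbound.trans_eq ?_)
  congr 2
  field_simp

end Hoeffding

lemma abs_le_mul_abs_pow_three_of_abs_inv_pow_three_mul_le {p q L : ℝ} (hp : p ≠ 0)
    (h : |p⁻¹ ^ 3 * q| ≤ L) : |q| ≤ L * |p| ^ 3 := by
  rwa [abs_mul, abs_pow, abs_inv, inv_pow, inv_mul_le_iff₀ (by positivity), mul_comm] at h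

theorem exact_confidence_interval_delta_one_general
    {Ω : Type*} [MeasurableSpace Ω] (μ : Measure Ω) [IsProbabilityMeasure μ]
    -- the parameter range Φ = [φmin, φmax]
    (φmin φmax : ℝ)
    -- f (the expectation as a function of the parameter) and its two derivatives on Φ
    (f f' f'' : ℝ → ℝ)
    (hf' : ∀ x ∈ Set.Icc φmin φmax, HasDerivWithinAt f (f' x) (Set.Icc φmin φmax) x)
    (hf'' : ∀ x ∈ Set.Icc φmin φmax, HasDerivWithinAt f' (f'' x) (Set.Icc φmin φmax) x)
    (hf'ne : ∀ x ∈ Set.Icc φmin φmax, f' x ≠ 0)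
    -- L = max over Φ of |f′(φ′)⁻³ · f″(φ′)|
    (L : ℝ)
    (hL : IsGreatest ((fun x => |(f' x)⁻¹ ^ 3 * f'' x|) '' Set.Icc φmin φmax) L)
    -- the data: n i.i.d. outcomes bounded in [a, b] with mean f φ
    (a b : ℝ) (hab : a < b)
    (n : ℕ) (hn : 1 ≤ n)
    (X : Fin n → Ω → ℝ)
    (hmeas : ∀ i, Measurable (X i))
    (hindep : iIndepFun X μ)
    (hbound : ∀ i, ∀ᵐ ω ∂μ, X i ω ∈ Set.Icc a b)
    (φ : ℝ) (hφ : φ ∈ Set.Icc φmin φmax)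
    (hmean : ∀ i, ∫ ω, X i ω ∂μ = f φ)
    -- the sample mean and the least squares estimator
    (S : Ω → ℝ) (hS : ∀ ω, S ω = (∑ i, X i ω) / n)
    (φLS : Ω → ℝ)
    (hφLS : ∀ ω, φLS ω ∈ Set.Icc φmin φmax ∧
      ∀ φ' ∈ Set.Icc φmin φmax, |S ω - f (φLS ω)| ≤ |S ω - f φ'|)
    -- V_max and δ₁
    (Vmax : ℝ) (hVmax : Vmax = (b - a) ^ 2 / 4)
    (ε : ℝ) (hε : ε ∈ Set.Ioo (0 : ℝ) 1)
    (δ1 : Ω → ℝ)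
    (hδ1 : ∀ ω, δ1 ω =
      (1 / |f' (φLS ω)|) * Real.sqrt ((2 / n) * Vmax * Real.log (2 / ε))
        + (L / n) * Vmax * Real.log (2 / ε)) :
    μ {ω | δ1 ω < |φLS ω - φ|} ≤ ENNReal.ofReal ε := by
  obtain ⟨hε0, hε1⟩ := hε
  have hlog : 0 < log (2 / ε) := log_pos (by rw [lt_div_iff₀ hε0]; linarith)
  set t := √(2 / n * Vmax * log (2 / ε))
  have ht2 : t ^ 2 = 2 / n * Vmax * log (2 / ε) := sq_sqrt (by rw [hVmax]; positivity)
  have hbad : {ω | δ1 ω < |φLS ω - φ|} ⊆ {ω | t ≤ |(∑ i, X i ω) / n - f φ|} := by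
    intro ω hω
    by_contra! hsmall
    rw [mem_ofPred_eq, ← hS, not_le] at hsmall
    refine (show δ1 ω < |φLS ω - φ| from hω).not_ge ?_
    rw [hδ1, one_div_mul_eq_div, show L / n * Vmax * log (2 / ε) = L / 2 * t ^ 2 by
      rw [ht2]; ring]
    exact abs_sub_le_of_isMinOn ordConnected_Icc hf' hf'' hf'ne
      (fun x hx => abs_le_mul_abs_pow_three_of_abs_inv_pow_three_mul_le (hf'ne x hx)
        (hL.2 ⟨x, hx, rfl⟩)) (hφLS ω).1 hφ (isMinOn_iff.mpr (hφLS ω).2) hsmall.le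
  have hexp : 2 * exp (-2 * n * t ^ 2 / (b - a) ^ 2) = ε := by
    have hba : b - a ≠ 0 := (sub_pos.mpr hab).ne'
    rw [ht2, hVmax, show -2 * (n : ℝ) * (2 / n * ((b - a) ^ 2 / 4) * log (2 / ε)) / (b - a) ^ 2
      = -log (2 / ε) by field_simp; ring, exp_neg, exp_log (by positivity)]
    field_simp
  calc μ {ω | δ1 ω < |φLS ω - φ|} ≤ μ {ω | t ≤ |(∑ i, X i ω) / n - f φ|} := measure_mono hbad
    _ ≤ ENNReal.ofReal ε := hexp ▸ measure_abs_sampleMean_sub_ge_le_of_mem_Icc (by omega)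
        (fun i => (hmeas i).aemeasurable) hindep hbound hmean (sqrt_nonneg _)

/-- Part of Theorem 1: for any `n ≥ 1`, `ε ∈ (0,1)` and true parameter `φ ∈ Φ`,
the least squares estimate satisfies `P[|φ^LS_n − φ| > δ₁(x^n, ε)] ≤ ε`, where
`δ₁ = (1/|f′(φ^LS_n)|)·√((2/n)·V_max·ln(2/ε)) + (L/n)·V_max·ln(2/ε)`. -/
theorem exact_confidence_interval_delta_one
    {Ω : Type*} [MeasurableSpace Ω] (μ : Measure Ω) [IsProbabilityMeasure μ]
    -- the parameter range Φ = [φmin, φmax]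
    (φmin φmax : ℝ) (hΦ : φmin < φmax)
    -- f (the expectation as a function of the parameter) and its two derivatives on Φ
    (f f' f'' : ℝ → ℝ)
    (hf' : ∀ x ∈ Set.Icc φmin φmax, HasDerivWithinAt f (f' x) (Set.Icc φmin φmax) x)
    (hf'' : ∀ x ∈ Set.Icc φmin φmax, HasDerivWithinAt f' (f'' x) (Set.Icc φmin φmax) x)
    (hf''cont : ContinuousOn f'' (Set.Icc φmin φmax))
    (hinj : Set.InjOn f (Set.Icc φmin φmax))
    (hf'ne : ∀ x ∈ Set.Icc φmin φmax, f' x ≠ 0)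
    -- L = max over Φ of |f′(φ′)⁻³ · f″(φ′)|
    (L : ℝ)
    (hL : IsGreatest ((fun x => |(f' x)⁻¹ ^ 3 * f'' x|) '' Set.Icc φmin φmax) L)
    -- the data: n i.i.d. outcomes bounded in [a, b] with mean f φ
    (a b : ℝ) (hab : a < b)
    (n : ℕ) (hn : 1 ≤ n)
    (X : Fin n → Ω → ℝ)
    (hmeas : ∀ i, Measurable (X i))
    (hindep : iIndepFun X μ)
    (hident : ∀ i j, IdentDistrib (X i) (X j) μ μ)
    (hbound : ∀ i, ∀ᵐ ω ∂μ, X i ω ∈ Set.Icc a b)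
    (φ : ℝ) (hφ : φ ∈ Set.Icc φmin φmax)
    (hmean : ∀ i, ∫ ω, X i ω ∂μ = f φ)
    -- the sample mean and the least squares estimator
    (S : Ω → ℝ) (hS : ∀ ω, S ω = (∑ i, X i ω) / n)
    (φLS : Ω → ℝ)
    (hφLS : ∀ ω, φLS ω ∈ Set.Icc φmin φmax ∧
      ∀ φ' ∈ Set.Icc φmin φmax, |S ω - f (φLS ω)| ≤ |S ω - f φ'|)
    -- V_max and δ₁
    (Vmax : ℝ) (hVmax : Vmax = (b - a) ^ 2 / 4)
    (ε : ℝ) (hε : ε ∈ Set.Ioo (0 : ℝ) 1)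
    (δ1 : Ω → ℝ)
    (hδ1 : ∀ ω, δ1 ω =
      (1 / |f' (φLS ω)|) * Real.sqrt ((2 / n) * Vmax * Real.log (2 / ε))
        + (L / n) * Vmax * Real.log (2 / ε)) :
    μ {ω | δ1 ω < |φLS ω - φ|} ≤ ENNReal.ofReal ε :=
  exact_confidence_interval_delta_one_general μ φmin φmax f f' f'' hf' hf'' hf'ne L hL a b hab n hn
    X hmeas hindep hbound φ hφ hmean S hS φLS hφLS Vmax hVmax ε hε δ1 hδ1
end

section
/- (Relation to the linearized uncertainty, Eq. (20).) For any fixed ε ∈ (0,1) and true parameter φ in the interior relevant range, limsup_{n→∞} √n · E[δ(x^n, ε)] ≤ B_LU · √(2 ln(4/ε)), where B_LU = √(Var(X₁)) / |f′(φ)| is the coefficient of the linearized uncertainty and the expectation is over the data x^n = (X₁,…,Xₙ). -/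
/-!
By the strong law of large numbers, `S_n → f(φ)` and `V_n → Var X₁` almost surely. The
least-squares estimate is a continuous function of `S_n` (the preimage under `f` of the nearest
point of the interval `f(Φ)`), so `f′(φ^LS_n) → f′(φ)` almost surely, and hence
`√n · δ₂ → √(2 Var X₁ ln(4/ε)) / |f′(φ)|` almost surely. On the other hand
`0 ≤ √n · δ ≤ √n · δ₁` is bounded uniformly, because `|f′|` is bounded below on `Φ`, so by
dominated convergence `√n · E[δ]` converges to the a.s. limit of `min (√n · δ₁) (√n · δ₂)`,
which is at most that of `√n · δ₂`.
-/

open MeasureTheory ProbabilityTheory Filter Topology Set Function Real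

theorem IsCompact.tendsto_nhds_of_injOn {X Y ι : Type*} [TopologicalSpace X]
    [TopologicalSpace Y] [T2Space Y] {K : Set X} (hK : IsCompact K) {f : X → Y}
    (hf : ContinuousOn f K) (hinj : InjOn f K) {l : Filter ι} {u : ι → X} {x : X}
    (hu : ∀ i, u i ∈ K) (hx : x ∈ K) (h : Tendsto (f ∘ u) l (𝓝 (f x))) :
    Tendsto u l (𝓝 x) := by
  have : CompactSpace K := isCompact_iff_compactSpace.mp hK
  have hemb := (hf.domRestrict.isClosedEmbedding hinj.injective).isEmbedding
  have hu' : Tendsto (fun i => (⟨u i, hu i⟩ : K)) l (𝓝 ⟨x, hx⟩) := hemb.tendsto_nhds_iff.mpr h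
  exact continuous_subtype_val.continuousAt.tendsto.comp hu'

theorem eq_max_min_of_abs_sub_le {lo hi r u : ℝ} (hu : u ∈ Icc lo hi)
    (h : |r - u| ≤ |r - max lo (min hi r)|) : u = max lo (min hi r) := by
  rcases hu with ⟨h1, h2⟩
  rcases le_total r lo with hr | hr
  · rw [max_eq_left (min_le_right _ _ |>.trans hr)] at h ⊢
    rw [abs_of_nonpos (by linarith), abs_of_nonpos (by linarith)] at h
    linarith
  rcases le_total hi r with hr' | hr'
  · rw [min_eq_left hr', max_eq_right (h1.trans h2)] at h ⊢
    rw [abs_of_nonneg (by linarith), abs_of_nonneg (by linarith)] at h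
    linarith
  · rw [min_eq_right hr', max_eq_right hr] at h ⊢
    rw [sub_self, abs_zero, abs_nonpos_iff, sub_eq_zero] at h
    exact h.symm

/-- For continuous `f`, `f '' [p, q]` is an interval `[lo, hi]` whose nearest point to `r` is
`max lo (min hi r)`; its preimage is the least-squares estimate `argmin_{x ∈ [p, q]} |r - f x|`. -/
noncomputable def lsEstimator (f : ℝ → ℝ) (p q r : ℝ) : ℝ :=
  invFunOn f (Icc p q) (max (sInf (f '' Icc p q)) (min (sSup (f '' Icc p q)) r))

section lsEstimator

variable {f : ℝ → ℝ} {p q : ℝ}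

theorem max_min_mem_image (hpq : p ≤ q) (hf : ContinuousOn f (Icc p q)) (r : ℝ) :
    max (sInf (f '' Icc p q)) (min (sSup (f '' Icc p q)) r) ∈ f '' Icc p q := by
  set lo := sInf (f '' Icc p q)
  set hi := sSup (f '' Icc p q)
  have hI : f '' Icc p q = Icc lo hi := hf.image_Icc hpq
  have hne : (Icc lo hi).Nonempty := hI ▸ (nonempty_Icc.2 hpq).image f
  rw [hI]
  exact ⟨le_max_left _ _, max_le (nonempty_Icc.1 hne) (min_le_left _ _)⟩

theorem lsEstimator_mem (hpq : p ≤ q) (hf : ContinuousOn f (Icc p q)) (r : ℝ) :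
    lsEstimator f p q r ∈ Icc p q :=
  invFunOn_mem (max_min_mem_image hpq hf r)

theorem apply_lsEstimator (hpq : p ≤ q) (hf : ContinuousOn f (Icc p q)) (r : ℝ) :
    f (lsEstimator f p q r) = max (sInf (f '' Icc p q)) (min (sSup (f '' Icc p q)) r) :=
  invFunOn_eq (max_min_mem_image hpq hf r)

theorem eq_lsEstimator (hpq : p ≤ q) (hf : ContinuousOn f (Icc p q)) (hinj : InjOn f (Icc p q))
    {r x : ℝ} (hx : x ∈ Icc p q) (hmin : ∀ y ∈ Icc p q, |r - f x| ≤ |r - f y|) :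
    x = lsEstimator f p q r := by
  have hfx : f x ∈ Icc (sInf (f '' Icc p q)) (sSup (f '' Icc p q)) :=
    hf.image_Icc hpq ▸ mem_image_of_mem f hx
  refine hinj hx (lsEstimator_mem hpq hf r) ?_
  rw [apply_lsEstimator hpq hf]
  refine eq_max_min_of_abs_sub_le hfx ?_
  simpa only [apply_lsEstimator hpq hf] using hmin _ (lsEstimator_mem hpq hf r)

theorem lsEstimator_apply (hpq : p ≤ q) (hf : ContinuousOn f (Icc p q))
    (hinj : InjOn f (Icc p q)) {x : ℝ} (hx : x ∈ Icc p q) : lsEstimator f p q (f x) = x :=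
  (eq_lsEstimator hpq hf hinj hx fun y _ => by simp).symm

theorem continuous_lsEstimator (hpq : p ≤ q) (hf : ContinuousOn f (Icc p q))
    (hinj : InjOn f (Icc p q)) : Continuous (lsEstimator f p q) := by
  refine continuous_iff_continuousAt.2 fun r => ?_
  refine isCompact_Icc.tendsto_nhds_of_injOn hf hinj (lsEstimator_mem hpq hf)
    (lsEstimator_mem hpq hf r) ?_
  have hcomp : f ∘ lsEstimator f p q =
      fun r => max (sInf (f '' Icc p q)) (min (sSup (f '' Icc p q)) r) :=
    funext (apply_lsEstimator hpq hf)
  rw [hcomp, apply_lsEstimator hpq hf]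
  exact (continuous_const.max (continuous_const.min continuous_id)).continuousAt

end lsEstimator

theorem tendsto_natCast_div_sub_one :
    Tendsto (fun n : ℕ => (n : ℝ) / ((n : ℝ) - 1)) atTop (𝓝 1) := by
  simpa [sub_eq_add_neg] using tendsto_natCast_div_add_atTop (-1 : ℝ)

noncomputable def sampleMean (x : ℕ → ℝ) (n : ℕ) : ℝ := (∑ i ∈ Finset.range n, x i) / n

noncomputable def sampleVariance (x : ℕ → ℝ) (n : ℕ) : ℝ :=
  (∑ i ∈ Finset.range n, (x i - sampleMean x n) ^ 2) / ((n : ℝ) - 1)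

theorem sampleVariance_eq (x : ℕ → ℝ) (n : ℕ) :
    sampleVariance x n =
      (sampleMean (x · ^ 2) n - sampleMean x n ^ 2) * (n / ((n : ℝ) - 1)) := by
  rcases Nat.eq_zero_or_pos n with rfl | hn
  · simp [sampleVariance, sampleMean]
  have hn : (n : ℝ) ≠ 0 := by positivity
  have hsum : ∑ i ∈ Finset.range n, x i = n * sampleMean x n := by
    rw [sampleMean]; field_simp
  have hsq : ∑ i ∈ Finset.range n, x i ^ 2 = n * sampleMean (x · ^ 2) n := by
    rw [sampleMean]; field_simp
  rw [sampleVariance]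
  simp only [sub_sq, Finset.sum_add_distrib, Finset.sum_sub_distrib, ← Finset.sum_mul,
    ← Finset.mul_sum, hsum, hsq, Finset.sum_const, Finset.card_range, nsmul_eq_mul]
  field_simp
  ring

theorem tendsto_sampleVariance {x : ℕ → ℝ} {m s : ℝ}
    (hm : Tendsto (sampleMean x) atTop (𝓝 m)) (hs : Tendsto (sampleMean (x · ^ 2)) atTop (𝓝 s)) :
    Tendsto (sampleVariance x) atTop (𝓝 (s - m ^ 2)) := by
  simpa [funext (sampleVariance_eq x)] using (hs.sub (hm.pow 2)).mul tendsto_natCast_div_sub_one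

theorem measurable_sampleMean {Ω : Type*} [MeasurableSpace Ω] {X : ℕ → Ω → ℝ}
    (hX : ∀ i, Measurable (X i)) (n : ℕ) : Measurable fun ω => sampleMean (X · ω) n := by
  unfold sampleMean
  fun_prop

theorem measurable_sampleVariance {Ω : Type*} [MeasurableSpace Ω] {X : ℕ → Ω → ℝ}
    (hX : ∀ i, Measurable (X i)) (n : ℕ) : Measurable fun ω => sampleVariance (X · ω) n := by
  have := measurable_sampleMean hX n
  unfold sampleVariance
  fun_prop

theorem ae_tendsto_sampleVariance {Ω : Type*} [MeasurableSpace Ω] {μ : Measure Ω}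
    [IsProbabilityMeasure μ] {X : ℕ → Ω → ℝ} (hX : MemLp (X 0) 2 μ)
    (hindep : Pairwise ((IndepFun · · μ) on X)) (hident : ∀ i, IdentDistrib (X i) (X 0) μ μ) :
    ∀ᵐ ω ∂μ, Tendsto (sampleVariance (X · ω)) atTop (𝓝 (variance (X 0) μ)) := by
  have hsq : Measurable fun x : ℝ => x ^ 2 := measurable_id.pow_const 2
  have hmoment := strong_law_ae_real (fun i ω => X i ω ^ 2) hX.integrable_sq
    (fun i j hij => (hindep hij).comp hsq hsq) (fun i => (hident i).comp hsq)
  filter_upwards [strong_law_ae_real X (hX.integrable one_le_two) hindep hident, hmoment]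
    with ω hmean hmoment
  rw [variance_eq_sub hX]
  exact tendsto_sampleVariance hmean hmoment

/-! `deltaHoeffding`, `deltaBernstein` and `deltaLS` are the paper's `δ₁`, `δ₂` and `δ`, with
`t = f′(φ^LS_n)` and `v = V_n`; `bernsteinWidth` is the bracket squared in `δ₂`. -/

noncomputable def deltaHoeffding (L Vmax ε t : ℝ) (n : ℕ) : ℝ :=
  (1 / |t|) * √((2 / n) * Vmax * log (2 / ε)) + (L / n) * Vmax * log (2 / ε)

noncomputable def bernsteinWidth (a b ε v : ℝ) (n : ℕ) : ℝ :=
  √((2 / n) * v * log (4 / ε)) + (8 * (b - a) / (3 * ((n : ℝ) - 1))) * log (4 / ε)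

noncomputable def deltaBernstein (L a b ε t v : ℝ) (n : ℕ) : ℝ :=
  (1 / |t|) * bernsteinWidth a b ε v n + (L / 2) * bernsteinWidth a b ε v n ^ 2

noncomputable def deltaLS (L Vmax a b ε t v : ℝ) (n : ℕ) : ℝ :=
  if n = 1 then deltaHoeffding L Vmax ε t n
  else min (deltaHoeffding L Vmax ε t n) (deltaBernstein L a b ε t v n)

theorem sqrt_mul_sqrt_two_div {n : ℕ} (hn : n ≠ 0) (y c : ℝ) :
    √n * √((2 / n) * y * c) = √(2 * y * c) := by
  rw [← sqrt_mul (Nat.cast_nonneg n)]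
  congr 1
  field_simp

theorem tendsto_inv_sqrt_natCast : Tendsto (fun n : ℕ => (√n)⁻¹) atTop (𝓝 0) :=
  tendsto_inv_atTop_zero.comp (tendsto_sqrt_atTop.comp tendsto_natCast_atTop_atTop)

theorem tendsto_sqrt_div_sub_one : Tendsto (fun n : ℕ => √n / ((n : ℝ) - 1)) atTop (𝓝 0) := by
  simpa using (tendsto_inv_sqrt_natCast.mul tendsto_natCast_div_sub_one).congr' <| by
    filter_upwards [eventually_ne_atTop 0] with n hn
    have := sq_sqrt (Nat.cast_nonneg (α := ℝ) n)
    have hs : √(n : ℝ) ≠ 0 := by positivity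
    field_simp
    rw [this]

section asymptotics

variable {L Vmax a b ε t₀ v₀ : ℝ} {t v : ℕ → ℝ}

theorem sqrt_mul_deltaHoeffding {n : ℕ} (hn : n ≠ 0) (t : ℝ) :
    √n * deltaHoeffding L Vmax ε t n =
      1 / |t| * √(2 * Vmax * log (2 / ε)) + L * Vmax * log (2 / ε) * (√n)⁻¹ := by
  rw [deltaHoeffding, ← sqrt_mul_sqrt_two_div hn, ← one_div, ← sqrt_div_self']
  ring

theorem tendsto_one_div_abs (ht : Tendsto t atTop (𝓝 t₀)) (ht₀ : t₀ ≠ 0) :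
    Tendsto (fun n => 1 / |t n|) atTop (𝓝 (1 / |t₀|)) :=
  tendsto_const_nhds.div ht.abs (abs_ne_zero.2 ht₀)

theorem tendsto_sqrt_mul_deltaHoeffding (ht : Tendsto t atTop (𝓝 t₀)) (ht₀ : t₀ ≠ 0) :
    Tendsto (fun n : ℕ => √n * deltaHoeffding L Vmax ε (t n) n) atTop
      (𝓝 ((1 / |t₀|) * √(2 * Vmax * log (2 / ε)))) := by
  have hlim := ((tendsto_one_div_abs ht ht₀).mul_const
    √(2 * Vmax * log (2 / ε))).add (tendsto_inv_sqrt_natCast.const_mul (L * Vmax * log (2 / ε)))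
  rw [mul_zero, add_zero] at hlim
  refine hlim.congr' ?_
  filter_upwards [eventually_ne_atTop 0] with n hn
  rw [sqrt_mul_deltaHoeffding hn]

theorem tendsto_sqrt_mul_bernsteinWidth (hv : Tendsto v atTop (𝓝 v₀)) :
    Tendsto (fun n : ℕ => √n * bernsteinWidth a b ε (v n) n) atTop
      (𝓝 √(2 * v₀ * log (4 / ε))) := by
  have hlim := (((hv.const_mul 2).mul_const (log (4 / ε))).sqrt).add
    (tendsto_sqrt_div_sub_one.const_mul (8 * (b - a) / 3 * log (4 / ε)))
  rw [mul_zero, add_zero] at hlim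
  refine hlim.congr' ?_
  filter_upwards [eventually_gt_atTop 1] with n hn
  have hn1 : (n : ℝ) - 1 ≠ 0 := sub_ne_zero.2 (by exact_mod_cast hn.ne')
  rw [bernsteinWidth, mul_add, sqrt_mul_sqrt_two_div (by omega)]
  field_simp

theorem tendsto_sqrt_mul_deltaBernstein (ht : Tendsto t atTop (𝓝 t₀)) (ht₀ : t₀ ≠ 0)
    (hv : Tendsto v atTop (𝓝 v₀)) :
    Tendsto (fun n : ℕ => √n * deltaBernstein L a b ε (t n) (v n) n) atTop
      (𝓝 ((1 / |t₀|) * √(2 * v₀ * log (4 / ε)))) := by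
  have hw := tendsto_sqrt_mul_bernsteinWidth (a := a) (b := b) (ε := ε) hv
  have hlim := ((tendsto_one_div_abs ht ht₀).mul hw).add
    (((hw.mul hw).mul tendsto_inv_sqrt_natCast).const_mul (L / 2))
  rw [mul_zero, mul_zero, add_zero] at hlim
  refine hlim.congr' ?_
  filter_upwards [eventually_ne_atTop 0] with n hn
  have hs : √(n : ℝ) ≠ 0 := by positivity
  rw [deltaBernstein]
  field_simp

theorem tendsto_sqrt_mul_deltaLS (ht : Tendsto t atTop (𝓝 t₀)) (ht₀ : t₀ ≠ 0)
    (hv : Tendsto v atTop (𝓝 v₀)) :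
    Tendsto (fun n : ℕ => √n * deltaLS L Vmax a b ε (t n) (v n) n) atTop
      (𝓝 (min ((1 / |t₀|) * √(2 * Vmax * log (2 / ε)))
        ((1 / |t₀|) * √(2 * v₀ * log (4 / ε))))) := by
  refine ((tendsto_sqrt_mul_deltaHoeffding (L := L) ht ht₀).min
    (tendsto_sqrt_mul_deltaBernstein (L := L) (a := a) (b := b) ht ht₀ hv)).congr' ?_
  filter_upwards [eventually_ne_atTop 1] with n hn
  rw [deltaLS, if_neg hn, mul_min_of_nonneg _ _ (sqrt_nonneg _)]

end asymptotics

section bounds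

variable {L Vmax a b ε : ℝ}

theorem deltaHoeffding_nonneg (hL : 0 ≤ L) (hVmax : 0 ≤ Vmax) (hε : 0 ≤ log (2 / ε))
    (t : ℝ) (n : ℕ) : 0 ≤ deltaHoeffding L Vmax ε t n := by
  unfold deltaHoeffding
  positivity

theorem deltaBernstein_nonneg (hL : 0 ≤ L) (hab : a ≤ b) (hε : 0 ≤ log (4 / ε))
    (t v : ℝ) {n : ℕ} (hn : n ≠ 0) : 0 ≤ deltaBernstein L a b ε t v n := by
  have hn1 : (0 : ℝ) ≤ n - 1 := sub_nonneg.2 (by exact_mod_cast Nat.one_le_iff_ne_zero.2 hn)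
  have hab' : 0 ≤ b - a := sub_nonneg.2 hab
  unfold deltaBernstein bernsteinWidth
  positivity

theorem deltaLS_nonneg (hL : 0 ≤ L) (hVmax : 0 ≤ Vmax) (hab : a ≤ b)
    (hε₂ : 0 ≤ log (2 / ε)) (hε₄ : 0 ≤ log (4 / ε)) (t v : ℝ) {n : ℕ} (hn : n ≠ 0) :
    0 ≤ deltaLS L Vmax a b ε t v n := by
  have h₁ := deltaHoeffding_nonneg hL hVmax hε₂ t n
  unfold deltaLS
  split_ifs
  exacts [h₁, le_min h₁ (deltaBernstein_nonneg hL hab hε₄ t v hn)]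

theorem deltaLS_le_deltaHoeffding (t v : ℝ) (n : ℕ) :
    deltaLS L Vmax a b ε t v n ≤ deltaHoeffding L Vmax ε t n := by
  unfold deltaLS
  split_ifs
  exacts [le_rfl, min_le_left _ _]

theorem abs_sqrt_mul_deltaLS_le (hL : 0 ≤ L) (hVmax : 0 ≤ Vmax) (hab : a ≤ b)
    (hε₂ : 0 ≤ log (2 / ε)) (hε₄ : 0 ≤ log (4 / ε)) {t K : ℝ} (hK : 1 / |t| ≤ K) (v : ℝ)
    (n : ℕ) :
    |√n * deltaLS L Vmax a b ε t v n| ≤ K * √(2 * Vmax * log (2 / ε)) + L * Vmax * log (2 / ε) := by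
  rcases eq_or_ne n 0 with rfl | hn
  · have hK₀ : 0 ≤ K := (one_div_nonneg.2 (abs_nonneg t)).trans hK
    simp only [CharP.cast_eq_zero, sqrt_zero, zero_mul, abs_zero]
    positivity
  have hinv : (√n)⁻¹ ≤ 1 := inv_le_one_of_one_le₀ (one_le_sqrt.2 (by exact_mod_cast hn.bot_lt))
  rw [abs_of_nonneg (mul_nonneg (sqrt_nonneg _) (deltaLS_nonneg hL hVmax hab hε₂ hε₄ t v hn))]
  calc √n * deltaLS L Vmax a b ε t v n ≤ √n * deltaHoeffding L Vmax ε t n :=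
        mul_le_mul_of_nonneg_left (deltaLS_le_deltaHoeffding t v n) (sqrt_nonneg _)
    _ = 1 / |t| * √(2 * Vmax * log (2 / ε)) + L * Vmax * log (2 / ε) * (√n)⁻¹ :=
        sqrt_mul_deltaHoeffding hn t
    _ ≤ K * √(2 * Vmax * log (2 / ε)) + L * Vmax * log (2 / ε) * 1 := by gcongr
    _ = _ := by rw [mul_one]

end bounds

theorem tendsto_sqrt_mul_integral_deltaLS {Ω : Type*} [MeasurableSpace Ω] {μ : Measure Ω}
    [IsProbabilityMeasure μ] {L Vmax a b ε t₀ v₀ K : ℝ} {T V : ℕ → Ω → ℝ}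
    (hL : 0 ≤ L) (hVmax : 0 ≤ Vmax) (hab : a ≤ b) (hε₂ : 0 ≤ log (2 / ε))
    (hε₄ : 0 ≤ log (4 / ε)) (hTm : ∀ n, Measurable (T n)) (hVm : ∀ n, Measurable (V n))
    (hK : ∀ n ω, 1 / |T n ω| ≤ K) (ht₀ : t₀ ≠ 0)
    (hlim : ∀ᵐ ω ∂μ, Tendsto (T · ω) atTop (𝓝 t₀) ∧ Tendsto (V · ω) atTop (𝓝 v₀)) :
    Tendsto (fun n : ℕ => √n * ∫ ω, deltaLS L Vmax a b ε (T n ω) (V n ω) n ∂μ) atTop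
      (𝓝 (min ((1 / |t₀|) * √(2 * Vmax * log (2 / ε)))
        ((1 / |t₀|) * √(2 * v₀ * log (4 / ε))))) := by
  have hmeas (n : ℕ) : Measurable fun ω => deltaLS L Vmax a b ε (T n ω) (V n ω) n := by
    have := hTm n
    have := hVm n
    unfold deltaLS deltaHoeffding deltaBernstein bernsteinWidth
    split_ifs <;> fun_prop
  have hdom := tendsto_integral_of_dominated_convergence (μ := μ) _
    (fun n => ((hmeas n).const_mul √n).aestronglyMeasurable) (integrable_const _)
    (fun n => .of_forall fun ω => (norm_eq_abs _).trans_le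
      (abs_sqrt_mul_deltaLS_le hL hVmax hab hε₂ hε₄ (hK n ω) (V n ω) n))
    (by
      filter_upwards [hlim] with ω hω
      exact tendsto_sqrt_mul_deltaLS hω.1 ht₀ hω.2)
  simp_rw [← integral_const_mul]
  rwa [integral_const, probReal_univ, one_smul] at hdom

theorem limsup_sqrt_n_expectation_delta_le_LU_general
    {Ω : Type*} [MeasurableSpace Ω] (μ : Measure Ω) [IsProbabilityMeasure μ]
    (φmin φmax : ℝ) (hΦ : φmin < φmax)
    (f f' f'' : ℝ → ℝ)
    (hf' : ∀ x ∈ Set.Icc φmin φmax, HasDerivWithinAt f (f' x) (Set.Icc φmin φmax) x)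
    (hf'' : ∀ x ∈ Set.Icc φmin φmax, HasDerivWithinAt f' (f'' x) (Set.Icc φmin φmax) x)
    (hinj : Set.InjOn f (Set.Icc φmin φmax))
    (hf'ne : ∀ x ∈ Set.Icc φmin φmax, f' x ≠ 0)
    (L : ℝ)
    (hL : IsGreatest ((fun x => |(f' x)⁻¹ ^ 3 * f'' x|) '' Set.Icc φmin φmax) L)
    (a b : ℝ) (hab : a < b)
    (X : ℕ → Ω → ℝ)
    (hmeas : ∀ i, Measurable (X i))
    (hindep : iIndepFun X μ)
    (hident : ∀ i j, IdentDistrib (X i) (X j) μ μ)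
    (hbound : ∀ i, ∀ᵐ ω ∂μ, X i ω ∈ Set.Icc a b)
    (φ : ℝ) (hφ : φ ∈ Set.Ioo φmin φmax)
    (hmean : ∀ i, ∫ ω, X i ω ∂μ = f φ)
    (S : ℕ → Ω → ℝ)
    (hS : ∀ n ω, S n ω = (∑ i ∈ Finset.range n, X i ω) / n)
    (φLS : ℕ → Ω → ℝ)
    (hφLS : ∀ n ω, φLS n ω ∈ Set.Icc φmin φmax ∧
      ∀ φ' ∈ Set.Icc φmin φmax, |S n ω - f (φLS n ω)| ≤ |S n ω - f φ'|)
    (V : ℕ → Ω → ℝ)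
    (hV : ∀ n ω, V n ω = (∑ i ∈ Finset.range n, (X i ω - S n ω) ^ 2) / ((n : ℝ) - 1))
    (Vmax : ℝ) (hVmax : Vmax = (b - a) ^ 2 / 4)
    (ε : ℝ) (hε : ε ∈ Set.Ioo (0 : ℝ) 1)
    (δ1 δ2 δ : ℕ → Ω → ℝ)
    (hδ1 : ∀ n ω, δ1 n ω =
      (1 / |f' (φLS n ω)|) * Real.sqrt ((2 / n) * Vmax * Real.log (2 / ε))
        + (L / n) * Vmax * Real.log (2 / ε))
    (hδ2 : ∀ n ω, δ2 n ω =
      (1 / |f' (φLS n ω)|) *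
          (Real.sqrt ((2 / n) * V n ω * Real.log (4 / ε))
            + (8 * (b - a) / (3 * ((n : ℝ) - 1))) * Real.log (4 / ε))
        + (L / 2) *
          (Real.sqrt ((2 / n) * V n ω * Real.log (4 / ε))
            + (8 * (b - a) / (3 * ((n : ℝ) - 1))) * Real.log (4 / ε)) ^ 2)
    (hδ : ∀ n ω, δ n ω = if n = 1 then δ1 n ω else min (δ1 n ω) (δ2 n ω)) :
    limsup (fun n : ℕ => Real.sqrt n * ∫ ω, δ n ω ∂μ) atTop ≤
      (Real.sqrt (variance (X 0) μ) / |f' φ|) * Real.sqrt (2 * Real.log (4 / ε)) := by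
  have hpq := hΦ.le
  have hφI : φ ∈ Icc φmin φmax := Ioo_subset_Icc_self hφ
  have hf : ContinuousOn f (Icc φmin φmax) := fun x hx => (hf' x hx).continuousWithinAt
  have hf'c : ContinuousOn f' (Icc φmin φmax) := fun x hx => (hf'' x hx).continuousWithinAt
  have hε₂ : 0 ≤ log (2 / ε) := log_nonneg ((le_div_iff₀ hε.1).2 (by linarith [hε.2]))
  have hε₄ : 0 ≤ log (4 / ε) := log_nonneg ((le_div_iff₀ hε.1).2 (by linarith [hε.2]))
  have hL₀ : 0 ≤ L := let ⟨_, _, hx⟩ := hL.1; hx ▸ abs_nonneg _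
  obtain rfl : S = fun n ω => sampleMean (X · ω) n := funext₂ hS
  obtain rfl : V = fun n ω => sampleVariance (X · ω) n := funext₂ hV
  obtain rfl : φLS = fun n ω => lsEstimator f φmin φmax (sampleMean (X · ω) n) :=
    funext₂ fun n ω => eq_lsEstimator hpq hf hinj (hφLS n ω).1 (hφLS n ω).2
  have hT : Continuous fun r => f' (lsEstimator f φmin φmax r) :=
    hf'c.comp_continuous (continuous_lsEstimator hpq hf hinj) (lsEstimator_mem hpq hf)
  obtain ⟨K, hK⟩ := isCompact_Icc.exists_bound_of_continuousOn (hf'c.inv₀ hf'ne)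
  have hX : MemLp (X 0) 2 μ := memLp_of_bounded (hbound 0) (hmeas 0).aestronglyMeasurable 2
  have hpair : Pairwise ((IndepFun · · μ) on X) := fun i j hij => hindep.indepFun hij
  have hlim : ∀ᵐ ω ∂μ,
      Tendsto (fun n => f' (lsEstimator f φmin φmax (sampleMean (X · ω) n))) atTop (𝓝 (f' φ)) ∧
      Tendsto (fun n => sampleVariance (X · ω) n) atTop (𝓝 (variance (X 0) μ)) := by
    filter_upwards [strong_law_ae_real X (hX.integrable one_le_two) hpair (hident · 0),
      ae_tendsto_sampleVariance hX hpair (hident · 0)] with ω hS hV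
    rw [hmean 0] at hS
    have hT' := (hT.tendsto (f φ)).comp hS
    rw [lsEstimator_apply hpq hf hinj hφI] at hT'
    exact ⟨hT', hV⟩
  have hδ_eq : δ = fun n ω => deltaLS L Vmax a b ε
      (f' (lsEstimator f φmin φmax (sampleMean (X · ω) n))) (sampleVariance (X · ω) n) n := by
    funext n ω
    rw [hδ, hδ1, hδ2]
    rfl
  have hVmax₀ : 0 ≤ Vmax := hVmax ▸ by positivity
  have key := tendsto_sqrt_mul_integral_deltaLS (μ := μ) (L := L) (a := a) (b := b)
    (T := fun n ω => f' (lsEstimator f φmin φmax (sampleMean (X · ω) n))) hL₀ hVmax₀ hab.le hε₂ hε₄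
    (fun n => hT.measurable.comp (measurable_sampleMean hmeas n))
    (measurable_sampleVariance hmeas) (fun n ω => by simpa using hK _ (hφLS n ω).1)
    (hf'ne φ hφI) hlim
  rw [hδ_eq]
  refine key.limsup_eq.trans_le ((min_le_right _ _).trans_eq ?_)
  rw [show 2 * variance (X 0) μ * log (4 / ε) = variance (X 0) μ * (2 * log (4 / ε)) by ring,
    sqrt_mul (variance_nonneg _ _)]
  ring

/-- **Relation to the linearized uncertainty** (Eq. (20)): for fixed `ε ∈ (0,1)`
and true parameter `φ` in the interior of `Φ`,
`limsup_{n→∞} √n · E[δ(x^n, ε)] ≤ B_LU · √(2 ln(4/ε))`, where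
`B_LU = √(Var(X₁)) / |f′(φ)|`. -/
theorem limsup_sqrt_n_expectation_delta_le_LU
    {Ω : Type*} [MeasurableSpace Ω] (μ : Measure Ω) [IsProbabilityMeasure μ]
    (φmin φmax : ℝ) (hΦ : φmin < φmax)
    (f f' f'' : ℝ → ℝ)
    (hf' : ∀ x ∈ Set.Icc φmin φmax, HasDerivWithinAt f (f' x) (Set.Icc φmin φmax) x)
    (hf'' : ∀ x ∈ Set.Icc φmin φmax, HasDerivWithinAt f' (f'' x) (Set.Icc φmin φmax) x)
    (hf''cont : ContinuousOn f'' (Set.Icc φmin φmax))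
    (hinj : Set.InjOn f (Set.Icc φmin φmax))
    (hf'ne : ∀ x ∈ Set.Icc φmin φmax, f' x ≠ 0)
    (L : ℝ)
    (hL : IsGreatest ((fun x => |(f' x)⁻¹ ^ 3 * f'' x|) '' Set.Icc φmin φmax) L)
    (a b : ℝ) (hab : a < b)
    (X : ℕ → Ω → ℝ)
    (hmeas : ∀ i, Measurable (X i))
    (hindep : iIndepFun X μ)
    (hident : ∀ i j, IdentDistrib (X i) (X j) μ μ)
    (hbound : ∀ i, ∀ᵐ ω ∂μ, X i ω ∈ Set.Icc a b)
    (φ : ℝ) (hφ : φ ∈ Set.Ioo φmin φmax)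
    (hmean : ∀ i, ∫ ω, X i ω ∂μ = f φ)
    (S : ℕ → Ω → ℝ)
    (hS : ∀ n ω, S n ω = (∑ i ∈ Finset.range n, X i ω) / n)
    (φLS : ℕ → Ω → ℝ)
    (hφLS : ∀ n ω, φLS n ω ∈ Set.Icc φmin φmax ∧
      ∀ φ' ∈ Set.Icc φmin φmax, |S n ω - f (φLS n ω)| ≤ |S n ω - f φ'|)
    (V : ℕ → Ω → ℝ)
    (hV : ∀ n ω, V n ω = (∑ i ∈ Finset.range n, (X i ω - S n ω) ^ 2) / ((n : ℝ) - 1))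
    (Vmax : ℝ) (hVmax : Vmax = (b - a) ^ 2 / 4)
    (ε : ℝ) (hε : ε ∈ Set.Ioo (0 : ℝ) 1)
    (δ1 δ2 δ : ℕ → Ω → ℝ)
    (hδ1 : ∀ n ω, δ1 n ω =
      (1 / |f' (φLS n ω)|) * Real.sqrt ((2 / n) * Vmax * Real.log (2 / ε))
        + (L / n) * Vmax * Real.log (2 / ε))
    (hδ2 : ∀ n ω, δ2 n ω =
      (1 / |f' (φLS n ω)|) *
          (Real.sqrt ((2 / n) * V n ω * Real.log (4 / ε))
            + (8 * (b - a) / (3 * ((n : ℝ) - 1))) * Real.log (4 / ε))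
        + (L / 2) *
          (Real.sqrt ((2 / n) * V n ω * Real.log (4 / ε))
            + (8 * (b - a) / (3 * ((n : ℝ) - 1))) * Real.log (4 / ε)) ^ 2)
    (hδ : ∀ n ω, δ n ω = if n = 1 then δ1 n ω else min (δ1 n ω) (δ2 n ω)) :
    limsup (fun n : ℕ => Real.sqrt n * ∫ ω, δ n ω ∂μ) atTop ≤
      (Real.sqrt (variance (X 0) μ) / |f' φ|) * Real.sqrt (2 * Real.log (4 / ε)) :=
  limsup_sqrt_n_expectation_delta_le_LU_general μ φmin φmax hΦ f f' f'' hf' hf'' hinj hf'ne L hL a b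
    hab X hmeas hindep hident hbound φ hφ hmean S hS φLS hφLS V hV Vmax hVmax ε hε δ1 δ2 δ hδ1 hδ2
    hδ
end

section
/- (Deterministic Taylor reduction, Eq. (B7).) Let f : Φ → ℝ be twice continuously differentiable, injective, with f′(φ′) ≠ 0 for all φ′ in the compact interval Φ = [φ_min, φ_max]; let g = f⁻¹ on R_f = f(Φ) and L = max_{φ′ ∈ Φ} |f′(φ′)⁻³ · f″(φ′)|. For any s ∈ ℝ, let s^LS = argmin_{r ∈ R_f} |r − s| and φ^LS = g(s^LS). Then for every φ ∈ Φ, |φ^LS − φ| ≤ |g′(s^LS)| · |s − f(φ)| + (L/2) · |s − f(φ)|². -/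
/-!
Write `sLS = f ψ`. As a left inverse of `f` on a compact interval, `g` is continuous on the
interval `f '' Φ`, hence differentiable there with `g' = (f' ∘ g)⁻¹` and
`g'' = -(f' ∘ g)⁻³ (f'' ∘ g)`, so `|g''| ≤ L`. Taylor's theorem for `g` at `f ψ` with Lagrange
remainder gives `|ψ - φ| ≤ |g' (f ψ)| |f ψ - f φ| + L / 2 |f ψ - f φ|²`, and the nearest-point map
onto an interval is non-expansive: `|f ψ - f φ| ≤ |s - f φ|`.
-/

open Set Filter Topology

theorem IsCompact.continuousOn_image_of_leftInvOn {α β : Type*} [TopologicalSpace α]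
    [TopologicalSpace β] [T2Space β] {f : α → β} {finv : β → α} {s : Set α} (hs : IsCompact s)
    (hf : ContinuousOn f s) (hleft : LeftInvOn finv f s) : ContinuousOn finv (f '' s) := by
  refine continuousOn_iff_isClosed.2 fun t ht => ⟨f '' (t ∩ s), ?_, ?_⟩
  · exact ((hs.inter_left ht).image_of_continuousOn (hf.mono inter_subset_right)).isClosed
  · rw [inter_eq_self_of_subset_left (image_mono inter_subset_right), hleft.image_inter']

theorem HasDerivWithinAt.of_local_left_inverse {𝕜 : Type*} [NontriviallyNormedField 𝕜]
    {f g : 𝕜 → 𝕜} {f' a : 𝕜} {s t : Set 𝕜} (hg : Tendsto g (𝓝[s] a) (𝓝[t] (g a)))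
    (hf : HasDerivWithinAt f f' t (g a)) (hf' : f' ≠ 0) (ha : a ∈ s)
    (hfg : ∀ᶠ y in 𝓝[s] a, f (g y) = y) : HasDerivWithinAt g f'⁻¹ s a :=
  HasFDerivWithinAt.of_local_left_inverse
    (f' := ContinuousLinearEquiv.unitsEquivAut 𝕜 (Units.mk0 f' hf')) hg hf ha hfg

theorem exists_uIoo_ratio_hasDerivAt_eq_ratio_slope {f f' g g' : ℝ → ℝ} {a b : ℝ} (hab : a ≠ b)
    (hfc : ContinuousOn f (uIcc a b)) (hff' : ∀ x ∈ uIoo a b, HasDerivAt f (f' x) x)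
    (hgc : ContinuousOn g (uIcc a b)) (hgg' : ∀ x ∈ uIoo a b, HasDerivAt g (g' x) x) :
    ∃ c ∈ uIoo a b, (g b - g a) * f' c = (f b - f a) * g' c := by
  rcases hab.lt_or_gt with hab | hba
  · rw [uIcc_of_lt hab] at hfc hgc
    rw [uIoo_of_lt hab] at hff' hgg' ⊢
    exact exists_ratio_hasDerivAt_eq_ratio_slope f f' hab hfc hff' g g' hgc hgg'
  · rw [uIcc_of_gt hba] at hfc hgc
    rw [uIoo_of_gt hba] at hff' hgg' ⊢
    obtain ⟨c, hc, h⟩ := exists_ratio_hasDerivAt_eq_ratio_slope f f' hba hfc hff' g g' hgc hgg'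
    exact ⟨c, hc, by linear_combination -h⟩

theorem exists_uIoo_taylor_two {g g' g'' : ℝ → ℝ} {x y : ℝ} (hxy : x ≠ y)
    (hgc : ContinuousOn g (uIcc x y)) (hgg' : ∀ t ∈ uIoo x y, HasDerivAt g (g' t) t)
    (hg'c : ContinuousOn g' (uIcc x y)) (hg'g'' : ∀ t ∈ uIoo x y, HasDerivAt g' (g'' t) t) :
    ∃ d ∈ uIoo x y, g y - g x - g' x * (y - x) = g'' d / 2 * (y - x) ^ 2 := by
  -- Cauchy's mean value theorem for `t ↦ g t - g' x * t` against `t ↦ (t - x) ^ 2`, then the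
  -- mean value theorem for `g'` between `x` and the resulting point `c`.
  obtain ⟨c, hc, hcauchy⟩ := exists_uIoo_ratio_hasDerivAt_eq_ratio_slope
    (f := fun t => g t - g' x * t) (f' := fun t => g' t - g' x)
    (g := fun t => (t - x) ^ 2) (g' := fun t => 2 * (t - x)) hxy
    (by fun_prop)
    (fun t ht => ((hgg' t ht).sub ((hasDerivAt_id' t).const_mul (g' x))).congr_deriv (by ring))
    (by fun_prop) (fun t _ => (((hasDerivAt_id' t).sub_const x).pow 2).congr_deriv (by ring))
  have hcx : c ≠ x := by
    rintro rfl
    simp only [uIoo, mem_Ioo, inf_lt_left, left_lt_sup] at hc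
    exact hc.1 (not_le.1 hc.2).le
  have hsub : uIoo x c ⊆ uIoo x y :=
    Ioo_subset_Ioo (le_inf inf_le_left hc.1.le) (sup_le le_sup_left hc.2.le)
  obtain ⟨d, hd, hmvt⟩ := exists_uIoo_ratio_hasDerivAt_eq_ratio_slope (g := id) (g' := fun _ => 1)
    hcx.symm (hg'c.mono (uIcc_subset_uIcc_left (Ioo_subset_Icc_self hc)))
    (fun t ht => hg'g'' t (hsub ht)) continuousOn_id (fun t _ => hasDerivAt_id t)
  refine ⟨d, hsub hd, mul_right_cancel₀ (sub_ne_zero.2 hcx) ?_⟩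
  simp only [id] at hcauchy hmvt
  linear_combination -hcauchy / 2 - (y - x) ^ 2 / 2 * hmvt

theorem Set.OrdConnected.abs_sub_sub_mul_le {s : Set ℝ} (hs : s.OrdConnected)
    {g g' g'' : ℝ → ℝ} {C x y : ℝ} (hgg' : ∀ t ∈ s, HasDerivWithinAt g (g' t) s t)
    (hg'g'' : ∀ t ∈ s, HasDerivWithinAt g' (g'' t) s t) (hC : ∀ t ∈ s, |g'' t| ≤ C)
    (hx : x ∈ s) (hy : y ∈ s) :
    |g y - g x - g' x * (y - x)| ≤ C / 2 * (y - x) ^ 2 := by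
  rcases eq_or_ne x y with rfl | hxy
  · simp
  have hsub : uIcc x y ⊆ s := hs.uIcc_subset hx hy
  have hnhds : ∀ t ∈ uIoo x y, s ∈ 𝓝 t := fun t ht =>
    mem_interior_iff_mem_nhds.1 (interior_maximal (Ioo_subset_Icc_self.trans hsub) isOpen_Ioo ht)
  have hgc : ContinuousOn g s := fun t ht => (hgg' t ht).continuousWithinAt
  have hg'c : ContinuousOn g' s := fun t ht => (hg'g'' t ht).continuousWithinAt
  obtain ⟨d, hd, hd_eq⟩ := exists_uIoo_taylor_two hxy (hgc.mono hsub)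
    (fun t ht => (hgg' t (hsub (Ioo_subset_Icc_self ht))).hasDerivAt (hnhds t ht))
    (hg'c.mono hsub)
    (fun t ht => (hg'g'' t (hsub (Ioo_subset_Icc_self ht))).hasDerivAt (hnhds t ht))
  rw [hd_eq, abs_mul, abs_div, abs_two, abs_sq]
  gcongr
  exact hC d (hsub (Ioo_subset_Icc_self hd))

theorem Set.OrdConnected.abs_sub_le_of_nearest {S : Set ℝ} (hS : S.OrdConnected) {p s y : ℝ}
    (hp : p ∈ S) (hy : y ∈ S) (hmin : ∀ r ∈ S, |p - s| ≤ |r - s|) : |p - y| ≤ |s - y| := by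
  by_cases hs : s ∈ uIcc y p
  · have hps := hmin s (hS.uIcc_subset hy hp hs)
    rw [sub_self, abs_zero, abs_nonpos_iff, sub_eq_zero] at hps
    rw [hps]
  · -- `s` lies beyond `p` or beyond `y`; in the latter case minimality against `y` forces `p = y`.
    have hys := hmin y hy
    simp only [mem_uIcc, not_or, not_and_or, not_le] at hs
    rcases hs with ⟨h1 | h1, h2 | h2⟩ <;> cases abs_cases (p - y) <;> cases abs_cases (s - y) <;>
      cases abs_cases (p - s) <;> cases abs_cases (y - s) <;> linarith

section InverseFunction

variable {𝕜 : Type*} [NontriviallyNormedField 𝕜] {f f' f'' g : 𝕜 → 𝕜} {K : Set 𝕜}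

theorem IsCompact.hasDerivWithinAt_image_of_leftInvOn (hK : IsCompact K)
    (hf : ∀ x ∈ K, HasDerivWithinAt f (f' x) K x) (hf'0 : ∀ x ∈ K, f' x ≠ 0)
    (hg : LeftInvOn g f K) : ∀ r ∈ f '' K, HasDerivWithinAt g (f' (g r))⁻¹ (f '' K) r := by
  have hgc := hK.continuousOn_image_of_leftInvOn (fun x hx => (hf x hx).continuousWithinAt) hg
  rintro _ ⟨x, hx, rfl⟩
  have hgx : g (f x) = x := hg hx
  rw [hgx]
  refine HasDerivWithinAt.of_local_left_inverse ?_ (by rw [hgx]; exact hf x hx) (hf'0 x hx)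
    (mem_image_of_mem f hx) (eventually_nhdsWithin_of_forall hg.rightInvOn_image)
  exact (hgc _ (mem_image_of_mem f hx)).tendsto_nhdsWithin
    (mapsTo_iff_image_subset.2 hg.image_image.subset)

theorem IsCompact.hasDerivWithinAt_inv_deriv_comp_of_leftInvOn (hK : IsCompact K)
    (hf : ∀ x ∈ K, HasDerivWithinAt f (f' x) K x) (hf' : ∀ x ∈ K, HasDerivWithinAt f' (f'' x) K x)
    (hf'0 : ∀ x ∈ K, f' x ≠ 0) (hg : LeftInvOn g f K) :
    ∀ r ∈ f '' K, HasDerivWithinAt (fun r => (f' (g r))⁻¹) (-((f' (g r))⁻¹ ^ 3 * f'' (g r)))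
      (f '' K) r := by
  have hmaps : MapsTo g (f '' K) K := mapsTo_iff_image_subset.2 hg.image_image.subset
  intro r hr
  have hgr := hmaps hr
  refine (((hf' _ hgr).comp r (hK.hasDerivWithinAt_image_of_leftInvOn hf hf'0 hg r hr) hmaps).inv
    (hf'0 _ hgr)).congr_deriv ?_
  simp only [Function.comp_apply]
  field_simp

end InverseFunction

theorem taylor_reduction_general
    (φmin φmax : ℝ)
    (f f' f'' : ℝ → ℝ)
    (hf' : ∀ x ∈ Set.Icc φmin φmax, HasDerivWithinAt f (f' x) (Set.Icc φmin φmax) x)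
    (hf'' : ∀ x ∈ Set.Icc φmin φmax, HasDerivWithinAt f' (f'' x) (Set.Icc φmin φmax) x)
    (hf'ne : ∀ x ∈ Set.Icc φmin φmax, f' x ≠ 0)
    (g : ℝ → ℝ) (hg : ∀ x ∈ Set.Icc φmin φmax, g (f x) = x)
    (L : ℝ)
    (hL : IsGreatest ((fun x => |(f' x)⁻¹ ^ 3 * f'' x|) '' Set.Icc φmin φmax) L)
    (s sLS : ℝ)
    (hmem : sLS ∈ f '' Set.Icc φmin φmax)
    (hmin : ∀ r ∈ f '' Set.Icc φmin φmax, |sLS - s| ≤ |r - s|)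
    (φ : ℝ) (hφ : φ ∈ Set.Icc φmin φmax) :
    |g sLS - φ| ≤ |(f' (g sLS))⁻¹| * |s - f φ| + (L / 2) * |s - f φ| ^ 2 := by
  obtain ⟨ψ, hψ, rfl⟩ := hmem
  have hleft : LeftInvOn g f (Icc φmin φmax) := fun x hx => hg x hx
  have hR : (f '' Icc φmin φmax).OrdConnected :=
    (isPreconnected_Icc.image f fun x hx => (hf' x hx).continuousWithinAt).ordConnected
  have hL_bound : ∀ r ∈ f '' Icc φmin φmax, |-((f' (g r))⁻¹ ^ 3 * f'' (g r))| ≤ L := by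
    rintro _ ⟨x, hx, rfl⟩
    rw [abs_neg, hg x hx]
    exact hL.2 (mem_image_of_mem _ hx)
  have hψR := mem_image_of_mem f hψ
  have hφR := mem_image_of_mem f hφ
  have hTaylor := hR.abs_sub_sub_mul_le
    (isCompact_Icc.hasDerivWithinAt_image_of_leftInvOn hf' hf'ne hleft)
    (isCompact_Icc.hasDerivWithinAt_inv_deriv_comp_of_leftInvOn hf' hf'' hf'ne hleft)
    hL_bound hψR hφR
  have hcontr : |f ψ - f φ| ≤ |s - f φ| := hR.abs_sub_le_of_nearest hψR hφR hmin
  have hL0 : 0 ≤ L := (abs_nonneg _).trans (hL_bound _ hψR)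
  rw [hg φ hφ, hg ψ hψ] at hTaylor
  rw [hg ψ hψ]
  calc |ψ - φ| = |(f' ψ)⁻¹ * (f ψ - f φ) - (φ - ψ - (f' ψ)⁻¹ * (f φ - f ψ))| := by
        congr 1; ring
    _ ≤ |(f' ψ)⁻¹ * (f ψ - f φ)| + |φ - ψ - (f' ψ)⁻¹ * (f φ - f ψ)| := abs_sub _ _
    _ ≤ |(f' ψ)⁻¹| * |f ψ - f φ| + L / 2 * |f ψ - f φ| ^ 2 := by
        rw [abs_mul, sq_abs, ← neg_sq, neg_sub]
        gcongr
    _ ≤ |(f' ψ)⁻¹| * |s - f φ| + L / 2 * |s - f φ| ^ 2 := by gcongr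

/-- **Deterministic Taylor reduction** (Eq. (B7)): with `g = f⁻¹` on `R_f = f(Φ)`,
`L = max_{φ′ ∈ Φ} |f′(φ′)⁻³ · f″(φ′)|`, `s^LS` the point of `R_f` nearest to `s`,
and `φ^LS = g(s^LS)`, for every `φ ∈ Φ`:
`|φ^LS − φ| ≤ |g′(s^LS)| · |s − f(φ)| + (L/2) · |s − f(φ)|²`,
where `g′(s^LS) = 1/f′(g(s^LS))`. -/
theorem taylor_reduction
    (φmin φmax : ℝ) (hΦ : φmin < φmax)
    (f f' f'' : ℝ → ℝ)
    (hf' : ∀ x ∈ Set.Icc φmin φmax, HasDerivWithinAt f (f' x) (Set.Icc φmin φmax) x)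
    (hf'' : ∀ x ∈ Set.Icc φmin φmax, HasDerivWithinAt f' (f'' x) (Set.Icc φmin φmax) x)
    (hf''cont : ContinuousOn f'' (Set.Icc φmin φmax))
    (hinj : Set.InjOn f (Set.Icc φmin φmax))
    (hf'ne : ∀ x ∈ Set.Icc φmin φmax, f' x ≠ 0)
    (g : ℝ → ℝ) (hg : ∀ x ∈ Set.Icc φmin φmax, g (f x) = x)
    (L : ℝ)
    (hL : IsGreatest ((fun x => |(f' x)⁻¹ ^ 3 * f'' x|) '' Set.Icc φmin φmax) L)
    (s sLS : ℝ)
    (hmem : sLS ∈ f '' Set.Icc φmin φmax)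
    (hmin : ∀ r ∈ f '' Set.Icc φmin φmax, |sLS - s| ≤ |r - s|)
    (φ : ℝ) (hφ : φ ∈ Set.Icc φmin φmax) :
    |g sLS - φ| ≤ |(f' (g sLS))⁻¹| * |s - f φ| + (L / 2) * |s - f φ| ^ 2 :=
  taylor_reduction_general φmin φmax f f' f'' hf' hf'' hf'ne g hg L hL s sLS hmem hmin φ hφ
end
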